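/- Strengthened chain rule for max-relative entropy: let A = A₁⊗A₂, ρ a density operator and σ positive semidefinite on A, E ∈ TPCP(A,B), F ∈ CP(A,B), and suppose there exists R ∈ CP(A₂,B) with F = R ∘ tr_{A₁}. Then D_max(E(ρ)‖F(σ)) ≤ D_max(ρ_{A₂}‖σ_{A₂}) + D_max(E(ρ)‖F(ρ)), where ρ_{A₂} = tr_{A₁}(ρ). -/

import Mathlib

open Matrix BigOperators
open scoped ComplexOrder Classical
noncomputable section
namespace QIT
variable {n m : Type*}

def Dmax [Fintype n] (ρ σ : Matrix n n ℂ) : EReal :=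
  sInf ((fun l : ℝ => (l : EReal)) '' {l : ℝ | ((2:ℝ) ^ l • σ - ρ).PosSemidef})

def matLog [Fintype n] [DecidableEq n] (A : Matrix n n ℂ) : Matrix n n ℂ :=
  if h : A.IsHermitian then
    (h.eigenvectorUnitary : Matrix n n ℂ) *
      Matrix.diagonal (fun i => (Real.log (h.eigenvalues i) : ℂ)) *
      (star (h.eigenvectorUnitary : Matrix n n ℂ))
  else 0

def mpow [Fintype n] [DecidableEq n] (A : Matrix n n ℂ) (p : ℝ) : Matrix n n ℂ :=
  if h : A.IsHermitian then
    (h.eigenvectorUnitary : Matrix n n ℂ) *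
      Matrix.diagonal (fun i => ((h.eigenvalues i ^ p : ℝ) : ℂ)) *
      (star (h.eigenvectorUnitary : Matrix n n ℂ))
  else 0

def msqrt [Fintype n] [DecidableEq n] (A : Matrix n n ℂ) : Matrix n n ℂ :=
  if h : A.PosSemidef then
    (h.1.eigenvectorUnitary : Matrix n n ℂ) *
      Matrix.diagonal ((↑) ∘ (Real.sqrt ·) ∘ h.1.eigenvalues) *
      (star (h.1.eigenvectorUnitary : Matrix n n ℂ))
  else 0

def SuppLE [Fintype n] (ρ σ : Matrix n n ℂ) : Prop :=
  ∀ v, σ.mulVec v = 0 → ρ.mulVec v = 0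

def relEntR [Fintype n] [DecidableEq n] (ρ σ : Matrix n n ℂ) : ℝ :=
  ((ρ * (matLog ρ - matLog σ)).trace).re

def relEnt [Fintype n] [DecidableEq n] (ρ σ : Matrix n n ℂ) : EReal :=
  if SuppLE ρ σ then ((relEntR ρ σ : ℝ) : EReal) else ⊤

def IsDensity [Fintype n] (ρ : Matrix n n ℂ) : Prop := ρ.PosSemidef ∧ ρ.trace = 1

def matTensorMap {k : Type*} (Φ : Matrix n n ℂ → Matrix m m ℂ)
    (M : Matrix (k × n) (k × n) ℂ) : Matrix (k × m) (k × m) ℂ :=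
  fun p q => Φ (fun a b => M (p.1, a) (q.1, b)) p.2 q.2

def matTensorMapLeft {k : Type*} (Φ : Matrix n n ℂ → Matrix m m ℂ)
    (M : Matrix (n × k) (n × k) ℂ) : Matrix (m × k) (m × k) ℂ :=
  fun p q => Φ (fun a b => M (a, p.2) (b, q.2)) p.1 q.1

def IsCP [Fintype n] [Fintype m] (Φ : Matrix n n ℂ →ₗ[ℂ] Matrix m m ℂ) : Prop :=
  ∀ (k : ℕ) (M : Matrix (Fin k × n) (Fin k × n) ℂ), M.PosSemidef →
    (matTensorMap (⇑Φ) M).PosSemidef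

def IsTP [Fintype n] [Fintype m] (Φ : Matrix n n ℂ →ₗ[ℂ] Matrix m m ℂ) : Prop :=
  ∀ M, (Φ M).trace = M.trace

def DmaxChan [Fintype n] [Fintype m] (E F : Matrix n n ℂ →ₗ[ℂ] Matrix m m ℂ) : EReal :=
  ⨆ φ : {φ : Matrix (n × n) (n × n) ℂ // IsDensity φ},
    Dmax (matTensorMap (⇑E) φ.1) (matTensorMap (⇑F) φ.1)

def DChan [Fintype n] [DecidableEq n] [Fintype m] [DecidableEq m]
    (E F : Matrix n n ℂ →ₗ[ℂ] Matrix m m ℂ) : EReal :=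
  ⨆ φ : {φ : Matrix (n × n) (n × n) ℂ // IsDensity φ},
    relEnt (matTensorMap (⇑E) φ.1) (matTensorMap (⇑F) φ.1)

def DAmort [Fintype n] [DecidableEq n] [Fintype m] [DecidableEq m]
    (E F : Matrix n n ℂ →ₗ[ℂ] Matrix m m ℂ) : EReal :=
  ⨆ r : ℕ, ⨆ φ : {φ : Matrix (Fin r × n) (Fin r × n) ℂ // IsDensity φ},
    ⨆ ω : {ω : Matrix (Fin r × n) (Fin r × n) ℂ // IsDensity ω},
      relEnt (matTensorMap (⇑E) φ.1) (matTensorMap (⇑F) ω.1) - relEnt φ.1 ω.1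

def traceNorm [Fintype n] [DecidableEq n] (A : Matrix n n ℂ) : ℝ :=
  ((msqrt (Aᴴ * A)).trace).re

def genFid [Fintype n] [DecidableEq n] (ρ σ : Matrix n n ℂ) : ℝ :=
  (traceNorm (msqrt ρ * msqrt σ) +
    Real.sqrt ((1 - ρ.trace.re) * (1 - σ.trace.re))) ^ 2

def pdist [Fintype n] [DecidableEq n] (ρ σ : Matrix n n ℂ) : ℝ :=
  Real.sqrt (1 - genFid ρ σ)

def tensorPow [Fintype n] (ρ : Matrix n n ℂ) (k : ℕ) :
    Matrix (Fin k → n) (Fin k → n) ℂ :=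
  fun v w => ∏ i, ρ (v i) (w i)

def chanPow [Fintype n] [DecidableEq n] [Fintype m]
    (E : Matrix n n ℂ →ₗ[ℂ] Matrix m m ℂ) (k : ℕ)
    (M : Matrix (Fin k → n) (Fin k → n) ℂ) : Matrix (Fin k → m) (Fin k → m) ℂ :=
  fun v w => ∑ x : Fin k → n, ∑ y : Fin k → n,
    (∏ i, E (Matrix.single (x i) (y i) 1) (v i) (w i)) * M x y


/-- The partial trace over the first factor `A₁`. -/
def ptrace₁ {n₁ n₂ : Type*} [Fintype n₁]
    (M : Matrix (n₁ × n₂) (n₁ × n₂) ℂ) : Matrix n₂ n₂ ℂ :=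
  fun a b => ∑ i, M (i, a) (i, b)


section Dmax

variable {n : Type*}

lemma posSemidef_two_rpow_smul_sub_trans {ρ σ τ : Matrix n n ℂ} {a b : ℝ}
    (hστ : ((2:ℝ) ^ a • τ - σ).PosSemidef) (hρσ : ((2:ℝ) ^ b • σ - ρ).PosSemidef) :
    ((2:ℝ) ^ (a + b) • τ - ρ).PosSemidef := by
  have h := (hστ.smul (Real.rpow_nonneg zero_le_two b)).add hρσ
  rwa [smul_sub, smul_smul, ← Real.rpow_add two_pos, add_comm b a, sub_add_sub_cancel] at h

variable [Fintype n]

lemma Dmax_le_of_posSemidef {ρ σ : Matrix n n ℂ} {l : ℝ}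
    (h : ((2:ℝ) ^ l • σ - ρ).PosSemidef) : Dmax ρ σ ≤ l :=
  sInf_le ⟨l, h, rfl⟩

lemma exists_posSemidef_of_Dmax_lt {ρ σ : Matrix n n ℂ} {x : EReal} (h : Dmax ρ σ < x) :
    ∃ l : ℝ, (l : EReal) < x ∧ ((2:ℝ) ^ l • σ - ρ).PosSemidef := by
  obtain ⟨_, ⟨l, hl, rfl⟩, hlx⟩ := sInf_lt_iff.mp h
  exact ⟨l, hlx, hl⟩

lemma logb_trace_div_le_Dmax {ρ σ : Matrix n n ℂ} (hρ : 0 < ρ.trace.re) :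
    (Real.logb 2 (ρ.trace.re / σ.trace.re) : EReal) ≤ Dmax ρ σ := by
  refine le_sInf ?_
  rintro _ ⟨l, hl, rfl⟩
  have htr : ρ.trace.re ≤ (2:ℝ) ^ l * σ.trace.re := by
    have := (Complex.nonneg_iff.mp hl.trace_nonneg).1
    simp only [trace_sub, trace_smul, Complex.sub_re, Complex.real_smul, Complex.re_ofReal_mul]
      at this
    linarith
  have hσ : 0 < σ.trace.re := pos_of_mul_pos_right (hρ.trans_le htr) (by positivity)
  have hdiv : ρ.trace.re / σ.trace.re ≤ (2:ℝ) ^ l := (div_le_iff₀ hσ).mpr htr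
  calc (Real.logb 2 (ρ.trace.re / σ.trace.re) : EReal)
      ≤ (Real.logb 2 ((2:ℝ) ^ l) : EReal) :=
        EReal.coe_le_coe (Real.logb_le_logb_of_le one_lt_two (div_pos hρ hσ) hdiv)
    _ = l := by rw [Real.logb_rpow two_pos (by norm_num)]

lemma Dmax_ne_bot {ρ σ : Matrix n n ℂ} (hρ : 0 < ρ.trace.re) : Dmax ρ σ ≠ ⊥ :=
  ne_bot_of_le_ne_bot (EReal.coe_ne_bot _) (logb_trace_div_le_Dmax hρ)

/-- Triangle inequality for `Dmax`, with the middle term `Dmax σ τ` replaced by an upper bound: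
`Dmax σ τ` itself may be `⊥`, in which case `Dmax σ τ + Dmax ρ σ` can be `⊥ + ⊤ = ⊥`. -/
lemma Dmax_le_add_of_le {ρ σ τ : Matrix n n ℂ} {a : EReal} (ha : a ≠ ⊥)
    (hστ : Dmax σ τ ≤ a) (hρσ : Dmax ρ σ ≠ ⊥) : Dmax ρ τ ≤ a + Dmax ρ σ := by
  refine EReal.le_add_of_forall_gt (Or.inl ha) (Or.inr hρσ) fun a' ha' b' hb' => ?_
  obtain ⟨l₁, hl₁, h₁⟩ := exists_posSemidef_of_Dmax_lt (hστ.trans_lt ha')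
  obtain ⟨l₂, hl₂, h₂⟩ := exists_posSemidef_of_Dmax_lt hb'
  calc Dmax ρ τ ≤ ((l₁ + l₂ : ℝ) : EReal) :=
        Dmax_le_of_posSemidef (posSemidef_two_rpow_smul_sub_trans h₁ h₂)
    _ ≤ a' + b' := by rw [EReal.coe_add]; exact add_le_add hl₁.le hl₂.le

lemma Dmax_map_le {m : Type*} [Fintype m] {Φ : Matrix n n ℂ →ₗ[ℂ] Matrix m m ℂ}
    (hΦ : ∀ M : Matrix n n ℂ, M.PosSemidef → (Φ M).PosSemidef) (ρ σ : Matrix n n ℂ) :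
    Dmax (Φ ρ) (Φ σ) ≤ Dmax ρ σ := by
  refine sInf_le_sInf (Set.image_mono fun l hl => ?_)
  simpa only [Set.mem_ofPred_eq, map_sub, LinearMap.CompatibleSMul.map_smul] using hΦ _ hl

end Dmax

lemma IsCP.posSemidef_map {n m : Type*} [Fintype n] [Fintype m]
    {Φ : Matrix n n ℂ →ₗ[ℂ] Matrix m m ℂ} (hΦ : IsCP Φ) {M : Matrix n n ℂ}
    (hM : M.PosSemidef) : (Φ M).PosSemidef :=
  (hΦ 1 (M.submatrix Prod.snd Prod.snd) (hM.submatrix _)).submatrix fun a => ((0 : Fin 1), a)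

lemma trace_ptrace₁ {n₁ n₂ : Type*} [Fintype n₁] [Fintype n₂]
    (M : Matrix (n₁ × n₂) (n₁ × n₂) ℂ) : (ptrace₁ M).trace = M.trace := by
  simp only [trace, diag, ptrace₁, Fintype.sum_prod_type]
  exact Finset.sum_comm

theorem Dmax_chain_rule_strengthened_general {n₁ n₂ m : Type*}
    [Fintype n₁] [Fintype n₂] [Fintype m]
    (ρ σ : Matrix (n₁ × n₂) (n₁ × n₂) ℂ) (hρ : IsDensity ρ)
    (E F : Matrix (n₁ × n₂) (n₁ × n₂) ℂ →ₗ[ℂ] Matrix m m ℂ)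
    (hETP : IsTP E)
    (R : Matrix n₂ n₂ ℂ →ₗ[ℂ] Matrix m m ℂ) (hR : IsCP R)
    (hfact : ∀ M : Matrix (n₁ × n₂) (n₁ × n₂) ℂ, F M = R (ptrace₁ M)) :
    Dmax (E ρ) (F σ) ≤ Dmax (ptrace₁ ρ) (ptrace₁ σ) + Dmax (E ρ) (F ρ) := by
  have htr : ρ.trace.re = 1 := by rw [hρ.2, Complex.one_re]
  have hdata : Dmax (F ρ) (F σ) ≤ Dmax (ptrace₁ ρ) (ptrace₁ σ) := by
    simpa only [hfact] using Dmax_map_le (fun _ => hR.posSemidef_map) (ptrace₁ ρ) (ptrace₁ σ)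
  refine Dmax_le_add_of_le (Dmax_ne_bot ?_) hdata (Dmax_ne_bot ?_)
  · rw [trace_ptrace₁, htr]; exact one_pos
  · rw [hETP ρ, htr]; exact one_pos

/-- **Strengthened chain rule for the max-relative entropy.**
Let `A = A₁ ⊗ A₂`, `ρ` a density operator and `σ` positive semidefinite on `A`,
`E ∈ TPCP(A,B)`, `F ∈ CP(A,B)`, and suppose there is `R ∈ CP(A₂,B)` with
`F = R ∘ tr_{A₁}`. Then
`D_max(E(ρ)‖F(σ)) ≤ D_max(ρ_{A₂}‖σ_{A₂}) + D_max(E(ρ)‖F(ρ))`. -/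
theorem Dmax_chain_rule_strengthened {n₁ n₂ m : Type*}
    [Fintype n₁] [Fintype n₂] [Fintype m]
    (ρ σ : Matrix (n₁ × n₂) (n₁ × n₂) ℂ) (hρ : IsDensity ρ) (hσ : σ.PosSemidef)
    (E F : Matrix (n₁ × n₂) (n₁ × n₂) ℂ →ₗ[ℂ] Matrix m m ℂ)
    (hE : IsCP E) (hETP : IsTP E) (hF : IsCP F)
    (R : Matrix n₂ n₂ ℂ →ₗ[ℂ] Matrix m m ℂ) (hR : IsCP R)
    (hfact : ∀ M : Matrix (n₁ × n₂) (n₁ × n₂) ℂ, F M = R (ptrace₁ M)) :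
    Dmax (E ρ) (F σ) ≤ Dmax (ptrace₁ ρ) (ptrace₁ σ) + Dmax (E ρ) (F ρ) :=
  Dmax_chain_rule_strengthened_general ρ σ hρ E F hETP R hR hfact

end QIT
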